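/- For every $h \in L^2_t L^1_\rho((0,\infty)\times(0,\infty))$ one has $\left\| \frac{1}{w} \iint_{\{(t,\rho):\, w > t\rho > 0\}} \frac{\rho}{1+\rho}\, h(t,\rho)\, d\rho\, dt \right\|_{L^2_w(0,\infty)} \le C\, \|h\|_{L^2_t L^1_\rho}$ for an absolute constant $C$. -/

import Mathlib

/-!
On the region `tρ < w` the weight satisfies `ρ/(1+ρ) ≤ min 1 (w/t)`, so after integrating out `ρ`
the integrand on the left is at most `(∫ min(w⁻¹, t⁻¹) F t dt)²` with `F t = ∫ |h t ρ| dρ`.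
This kernel is symmetric and `∫ min(w⁻¹, t⁻¹) t^{-1/2} dt = 4 w^{-1/2}`, so Schur's test with the
weight `t^{-1/2}` bounds the corresponding operator on `L²(0,∞)` by `4`.
-/

open MeasureTheory Set Function ENNReal

namespace MeasureTheory

variable {α : Type*} [MeasurableSpace α] {μ : Measure α}

theorem sq_lintegral_mul_le {f g : α → ℝ≥0∞} (hf : AEMeasurable f μ) (hg : AEMeasurable g μ) :
    (∫⁻ x, f x * g x ∂μ) ^ 2 ≤ (∫⁻ x, f x ^ 2 ∂μ) * ∫⁻ x, g x ^ 2 ∂μ := by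
  have holder := ENNReal.lintegral_mul_le_Lp_mul_Lq μ Real.HolderConjugate.two_two hf hg
  simp only [Pi.mul_apply, ENNReal.rpow_two] at holder
  calc (∫⁻ x, f x * g x ∂μ) ^ 2
      ≤ ((∫⁻ x, f x ^ 2 ∂μ) ^ (1 / 2 : ℝ) * (∫⁻ x, g x ^ 2 ∂μ) ^ (1 / 2 : ℝ)) ^ 2 := by
        gcongr
    _ = (∫⁻ x, f x ^ 2 ∂μ) * ∫⁻ x, g x ^ 2 ∂μ := by
        simp only [mul_pow, one_div, ← ENNReal.rpow_two, ENNReal.rpow_inv_rpow two_ne_zero]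

theorem sq_lintegral_mul_le_weighted {f g p : α → ℝ≥0∞} (hf : AEMeasurable f μ)
    (hg : AEMeasurable g μ) (hp : AEMeasurable p μ) (hp0 : ∀ᵐ x ∂μ, p x ≠ 0)
    (hp_top : ∀ᵐ x ∂μ, p x ≠ ⊤) :
    (∫⁻ x, f x * g x ∂μ) ^ 2 ≤
      (∫⁻ x, f x * p x ∂μ) * ∫⁻ x, f x * (g x ^ 2 * (p x)⁻¹) ∂μ := by
  set u : α → ℝ≥0∞ := fun x => (f x * p x) ^ (2⁻¹ : ℝ)
  set v : α → ℝ≥0∞ := fun x => (f x * (g x ^ 2 * (p x)⁻¹)) ^ (2⁻¹ : ℝ)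
  have hsq : ∀ a : ℝ≥0∞, (a ^ (2⁻¹ : ℝ)) ^ 2 = a := fun a => by
    rw [← ENNReal.rpow_two, ENNReal.rpow_inv_rpow two_ne_zero]
  have huv : (fun x => f x * g x) =ᵐ[μ] fun x => u x * v x := by
    filter_upwards [hp0, hp_top] with x hx0 hxtop
    have : f x * p x * (f x * (g x ^ 2 * (p x)⁻¹)) = (f x * g x) ^ 2 := by
      rw [show f x * p x * (f x * (g x ^ 2 * (p x)⁻¹)) = (f x * g x) ^ 2 * (p x * (p x)⁻¹) by
        ring, ENNReal.mul_inv_cancel hx0 hxtop, mul_one]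
    rw [← ENNReal.mul_rpow_of_nonneg _ _ (by norm_num), this, ← ENNReal.rpow_two,
      ENNReal.rpow_rpow_inv two_ne_zero]
  calc (∫⁻ x, f x * g x ∂μ) ^ 2 = (∫⁻ x, u x * v x ∂μ) ^ 2 := by rw [lintegral_congr_ae huv]
    _ ≤ (∫⁻ x, u x ^ 2 ∂μ) * ∫⁻ x, v x ^ 2 ∂μ :=
        sq_lintegral_mul_le (by fun_prop) (by fun_prop)
    _ = _ := by simp only [u, v, hsq]

theorem schur_test_lintegral_sq [SFinite μ] {K : α → α → ℝ≥0∞}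
    {p F : α → ℝ≥0∞} {c : ℝ≥0∞} (hK : Measurable (uncurry K)) (hK_symm : ∀ x y, K x y = K y x)
    (hp : Measurable p) (hF : Measurable F) (hp0 : ∀ᵐ x ∂μ, p x ≠ 0)
    (hp_top : ∀ᵐ x ∂μ, p x ≠ ⊤) (hKp : ∀ᵐ x ∂μ, ∫⁻ y, K x y * p y ∂μ ≤ c * p x) :
    ∫⁻ x, (∫⁻ y, K x y * F y ∂μ) ^ 2 ∂μ ≤ c ^ 2 * ∫⁻ x, F x ^ 2 ∂μ := by
  set G : α → ℝ≥0∞ := fun y => F y ^ 2 * (p y)⁻¹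
  have hKx : ∀ x, Measurable (K x) := fun x => hK.of_uncurry_left
  calc ∫⁻ x, (∫⁻ y, K x y * F y ∂μ) ^ 2 ∂μ
      ≤ ∫⁻ x, c * ∫⁻ y, p x * (K x y * G y) ∂μ ∂μ := by
        refine lintegral_mono_ae ?_
        filter_upwards [hKp] with x hx
        rw [lintegral_const_mul _ (by fun_prop), ← mul_assoc]
        exact (sq_lintegral_mul_le_weighted (hKx x).aemeasurable hF.aemeasurable
          hp.aemeasurable hp0 hp_top).trans (by gcongr)
    _ = c * ∫⁻ y, (∫⁻ x, K y x * p x ∂μ) * G y ∂μ := by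
        rw [lintegral_const_mul _ (by fun_prop), lintegral_lintegral_swap (by fun_prop)]
        refine congrArg (c * ·) (lintegral_congr fun y => ?_)
        rw [← lintegral_mul_const _ (by fun_prop)]
        refine lintegral_congr fun x => ?_
        rw [hK_symm x y]
        ring
    _ ≤ c * ∫⁻ y, c * F y ^ 2 ∂μ := by
        refine mul_le_mul_right (lintegral_mono_ae ?_) c
        filter_upwards [hKp] with y hy
        calc (∫⁻ x, K y x * p x ∂μ) * G y ≤ c * p y * G y := by gcongr
          _ = c * F y ^ 2 * (p y * (p y)⁻¹) := by ring
          _ ≤ c * F y ^ 2 := mul_le_of_le_one_right' (ENNReal.mul_inv_le_one _)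
    _ = c ^ 2 * ∫⁻ x, F x ^ 2 ∂μ := by
        rw [lintegral_const_mul _ (by fun_prop), ← mul_assoc, sq]

end MeasureTheory

/-- `∫ hardyKernel w t * F t dt = w⁻¹ ∫₀ʷ F + ∫_w^∞ F t / t`: Hardy's operator plus its adjoint. -/
noncomputable def hardyKernel (w t : ℝ) : ℝ≥0∞ := ENNReal.ofReal (min w⁻¹ t⁻¹)

theorem hardyKernel_comm (w t : ℝ) : hardyKernel w t = hardyKernel t w := by
  rw [hardyKernel, hardyKernel, min_comm]

theorem measurable_hardyKernel : Measurable (uncurry hardyKernel) := by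
  unfold hardyKernel
  fun_prop

theorem lintegral_Ioc_ofReal_rpow {a w : ℝ} (ha : -1 < a) (hw : 0 ≤ w) :
    ∫⁻ t in Ioc 0 w, ENNReal.ofReal (t ^ a) = ENNReal.ofReal (w ^ (a + 1) / (a + 1)) := by
  rw [← ofReal_integral_eq_lintegral_ofReal (intervalIntegral.intervalIntegrable_rpow' ha).1
      ((ae_restrict_iff' measurableSet_Ioc).2 (ae_of_all _ fun t ht => Real.rpow_nonneg ht.1.le _)),
    ← intervalIntegral.integral_of_le hw, integral_rpow (Or.inl ha),
    Real.zero_rpow (by linarith), sub_zero]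

theorem lintegral_Ioi_ofReal_rpow {a c : ℝ} (ha : a < -1) (hc : 0 < c) :
    ∫⁻ t in Ioi c, ENNReal.ofReal (t ^ a) = ENNReal.ofReal (-c ^ (a + 1) / (a + 1)) := by
  rw [← ofReal_integral_eq_lintegral_ofReal (integrableOn_Ioi_rpow_of_lt ha hc)
      ((ae_restrict_iff' measurableSet_Ioi).2
        (ae_of_all _ fun t ht => Real.rpow_nonneg (hc.trans ht).le _)),
    integral_Ioi_rpow_of_lt ha hc]

theorem lintegral_hardyKernel_mul_rpow_neg_half {w : ℝ} (hw : 0 < w) :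
    ∫⁻ t in Ioi 0, hardyKernel w t * ENNReal.ofReal (t ^ (-2⁻¹ : ℝ)) =
      4 * ENNReal.ofReal (w ^ (-2⁻¹ : ℝ)) := by
  have hnear : ∫⁻ t in Ioc 0 w, hardyKernel w t * ENNReal.ofReal (t ^ (-2⁻¹ : ℝ)) =
      2 * ENNReal.ofReal (w ^ (-2⁻¹ : ℝ)) := by
    rw [setLIntegral_congr_fun measurableSet_Ioc
        (g := fun t => ENNReal.ofReal w⁻¹ * ENNReal.ofReal (t ^ (-2⁻¹ : ℝ))) fun t ht => by
          rw [hardyKernel, min_eq_left ((inv_le_inv₀ hw ht.1).2 ht.2)],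
      lintegral_const_mul _ (by fun_prop), lintegral_Ioc_ofReal_rpow (by norm_num) hw.le,
      ← ENNReal.ofReal_mul (by positivity), ← ENNReal.ofReal_ofNat 2,
      ← ENNReal.ofReal_mul (by norm_num)]
    congr 1
    rw [Real.rpow_add_one hw.ne']
    field_simp
    norm_num
  have hfar : ∫⁻ t in Ioi w, hardyKernel w t * ENNReal.ofReal (t ^ (-2⁻¹ : ℝ)) =
      2 * ENNReal.ofReal (w ^ (-2⁻¹ : ℝ)) := by
    rw [setLIntegral_congr_fun measurableSet_Ioi
        (g := fun t => ENNReal.ofReal (t ^ (-2⁻¹ - 1 : ℝ))) fun t ht => by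
          have ht0 : 0 < t := hw.trans ht
          show _ = ENNReal.ofReal (t ^ (-2⁻¹ - 1 : ℝ))
          rw [hardyKernel, min_eq_right ((inv_le_inv₀ ht0 hw).2 (le_of_lt ht)),
            ← ENNReal.ofReal_mul (by positivity), Real.rpow_sub_one ht0.ne', div_eq_inv_mul],
      lintegral_Ioi_ofReal_rpow (by norm_num) hw, ← ENNReal.ofReal_ofNat 2,
      ← ENNReal.ofReal_mul (by norm_num)]
    rw [sub_add_cancel]
    ring_nf
  rw [← Ioc_union_Ioi_eq_Ioi hw.le, lintegral_union measurableSet_Ioi (Ioc_disjoint_Ioi le_rfl),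
    hnear, hfar, ← add_mul]
  norm_num

theorem setLIntegral_hyperbolic_le_lintegral_hardyKernel (g : ℝ × ℝ → ℝ≥0∞) {w : ℝ}
    (hw : 0 < w) :
    (ENNReal.ofReal w)⁻¹ * ∫⁻ p in {p : ℝ × ℝ | 0 < p.1 ∧ 0 < p.2 ∧ p.1 * p.2 < w},
        ENNReal.ofReal (p.2 / (1 + p.2)) * g p ≤
      ∫⁻ t in Ioi 0, hardyKernel w t * ∫⁻ ρ in Ioi 0, g (t, ρ) := by
  set R := {p : ℝ × ℝ | 0 < p.1 ∧ 0 < p.2 ∧ p.1 * p.2 < w}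
  have hR : MeasurableSet R := by measurability
  have hweight : ∀ p ∈ R, (ENNReal.ofReal w)⁻¹ * ENNReal.ofReal (p.2 / (1 + p.2)) ≤
      hardyKernel w p.1 := by
    rintro ⟨t, ρ⟩ ⟨ht, hρ, htρ⟩
    rw [← ENNReal.ofReal_inv_of_pos hw, ← ENNReal.ofReal_mul (by positivity), hardyKernel]
    refine ENNReal.ofReal_le_ofReal (le_min ?_ ?_)
    · exact mul_le_of_le_one_right (by positivity) ((div_le_one (by positivity)).2 (by linarith))
    · calc w⁻¹ * (ρ / (1 + ρ)) ≤ w⁻¹ * ρ := by gcongr; exact div_le_self hρ.le (by linarith)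
        _ ≤ t⁻¹ := by
          rw [inv_mul_le_iff₀ hw, ← div_eq_mul_inv, le_div_iff₀ ht]
          linarith
  calc (ENNReal.ofReal w)⁻¹ * ∫⁻ p in R, ENNReal.ofReal (p.2 / (1 + p.2)) * g p
      = ∫⁻ p in R, (ENNReal.ofReal w)⁻¹ * (ENNReal.ofReal (p.2 / (1 + p.2)) * g p) :=
        (lintegral_const_mul' _ _ (ENNReal.inv_ne_top.2 (ENNReal.ofReal_pos.2 hw).ne')).symm
    _ ≤ ∫⁻ p in R, hardyKernel w p.1 * g p := setLIntegral_mono' hR fun p hp => by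
        rw [← mul_assoc]
        gcongr
        exact hweight p hp
    _ ≤ ∫⁻ p in Ioi 0 ×ˢ Ioi 0, hardyKernel w p.1 * g p :=
        lintegral_mono_set fun p hp => ⟨hp.1, hp.2.1⟩
    _ ≤ ∫⁻ t in Ioi 0, ∫⁻ ρ in Ioi 0, hardyKernel w t * g (t, ρ) := by
        rw [Measure.volume_eq_prod, ← Measure.prod_restrict]
        exact lintegral_prod_le _
    _ = ∫⁻ t in Ioi 0, hardyKernel w t * ∫⁻ ρ in Ioi 0, g (t, ρ) :=
        lintegral_congr fun t => lintegral_const_mul' _ _ ENNReal.ofReal_ne_top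

/-- Dual estimate with the weight `ρ/(1+ρ)` on the hyperbolic region `{w > tρ > 0}`:
`‖w⁻¹ ∬_{w>tρ>0} ρ/(1+ρ) h(t,ρ) dρ dt‖_{L²_w(0,∞)} ≤ C ‖h‖_{L²_t L¹_ρ}`
(stated in squared form). -/
theorem dual_bound_hyperbolic_region :
    ∃ C : ℝ≥0∞, 0 < C ∧ C < ⊤ ∧
      ∀ h : ℝ → ℝ → ℝ, Measurable (Function.uncurry h) →
        (∫⁻ w in Set.Ioi (0:ℝ),
            ((ENNReal.ofReal w)⁻¹ *
              ∫⁻ p in {p : ℝ × ℝ | 0 < p.1 ∧ 0 < p.2 ∧ p.1 * p.2 < w},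
                ENNReal.ofReal (p.2 / (1 + p.2) * |h p.1 p.2|))^2) ≤
          C * ∫⁻ t in Set.Ioi (0:ℝ),
              (∫⁻ ρ in Set.Ioi (0:ℝ), ENNReal.ofReal |h t ρ|)^2 := by
  refine ⟨16, by norm_num, by norm_num, fun h hm => ?_⟩
  set F : ℝ → ℝ≥0∞ := fun t => ∫⁻ ρ in Ioi 0, ENNReal.ofReal |h t ρ|
  have hF : Measurable F := hm.abs.ennreal_ofReal.lintegral_prod_right'
  have hweight_pos : ∀ᵐ t ∂volume.restrict (Ioi 0), ENNReal.ofReal (t ^ (-2⁻¹ : ℝ)) ≠ 0 :=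
    (ae_restrict_iff' measurableSet_Ioi).2 <| ae_of_all _ fun t ht =>
      (ENNReal.ofReal_pos.2 (Real.rpow_pos_of_pos ht _)).ne'
  have hschur : ∀ᵐ w ∂volume.restrict (Ioi 0), ∫⁻ t in Ioi 0,
      hardyKernel w t * ENNReal.ofReal (t ^ (-2⁻¹ : ℝ)) ≤ 4 * ENNReal.ofReal (w ^ (-2⁻¹ : ℝ)) :=
    (ae_restrict_iff' measurableSet_Ioi).2 <| ae_of_all _ fun w hw =>
      (lintegral_hardyKernel_mul_rpow_neg_half hw).le
  calc _ ≤ ∫⁻ w in Ioi 0, (∫⁻ t in Ioi 0, hardyKernel w t * F t) ^ 2 := by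
        refine setLIntegral_mono' measurableSet_Ioi fun w hw => ?_
        simp_rw [ENNReal.ofReal_mul' (abs_nonneg _)]
        gcongr
        exact setLIntegral_hyperbolic_le_lintegral_hardyKernel _ hw
    _ ≤ 4 ^ 2 * ∫⁻ t in Ioi 0, F t ^ 2 :=
        schur_test_lintegral_sq measurable_hardyKernel hardyKernel_comm
          (by fun_prop) hF hweight_pos (ae_of_all _ fun _ => ENNReal.ofReal_ne_top) hschur
    _ = 16 * ∫⁻ t in Ioi 0, F t ^ 2 := by norm_num
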